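/- Consider a finite-horizon MDP with horizon $H$, true transition kernel $P^\star$, estimated kernel $\hat P$, a policy $\pi$, and a reward $r$ with $0\le \sum_h r_h\le 1$. Define $f_h(s,a) = \|\hat P_h(\cdot|s,a)-P^\star_h(\cdot|s,a)\|_{TV}$ and the truncated value function $\hat V^\pi_{h,\hat P,f}$ iteratively by $\hat Q^\pi_{h}(s,a)=\min\{1, f_h(s,a)+\hat P_h \hat V^\pi_{h+1}(s,a)\}$, $\hat V^\pi_h(s)=\mathbb{E}_{a\sim\pi_h(\cdot|s)}[\hat Q^\pi_h(s,a)]$ with $\hat V^\pi_{H+1}=0$. Then $|V^\pi_{P^\star,r} - V^\pi_{\hat P,r}| \le \hat V^\pi_{1,\hat P,f}(s_1)$. -/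
import Mathlib


open Finset

/-- A policy is stochastic: nonnegative and sums to one over actions. -/
def IsStochPolicy {S A : Type*} [Fintype A] (π : ℕ → S → A → ℝ) : Prop :=
  (∀ h s a, 0 ≤ π h s a) ∧ ∀ h s, ∑ a, π h s a = 1

/-- A transition kernel is stochastic: nonnegative and sums to one over next states. -/
def IsStochKernel {S A : Type*} [Fintype S] (P : ℕ → S → A → S → ℝ) : Prop :=
  (∀ h s a s', 0 ≤ P h s a s') ∧ ∀ h s a, ∑ s', P h s a s' = 1

/-- Value function at time `h` with `k` steps remaining (fuel). -/
noncomputable def valFuel {S A : Type*} [Fintype S] [Fintype A]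
    (P : ℕ → S → A → S → ℝ) (π : ℕ → S → A → ℝ) (r : ℕ → S → A → ℝ) :
    ℕ → ℕ → S → ℝ
  | 0, _, _ => 0
  | k + 1, h, s =>
      ∑ a, π h s a * (r h s a + ∑ s', P h s a s' * valFuel P π r k (h + 1) s')

/-- Truncated value function with bonus reward `b`:
`Q̂^π_h(s,a) = min{1, b_h(s,a) + P_h V̂^π_{h+1}(s,a)}`, `V̂^π_h(s) = 𝔼_{a∼π}[Q̂^π_h(s,a)]`. -/
noncomputable def tvalFuel {S A : Type*} [Fintype S] [Fintype A]
    (P : ℕ → S → A → S → ℝ) (π : ℕ → S → A → ℝ) (b : ℕ → S → A → ℝ) :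
    ℕ → ℕ → S → ℝ
  | 0, _, _ => 0
  | k + 1, h, s =>
      ∑ a, π h s a *
        min 1 (b h s a + ∑ s', P h s a s' * tvalFuel P π b k (h + 1) s')

section helpers

variable {S A : Type*} [Fintype S] [Fintype A]

lemma val_nonneg (P : ℕ → S → A → S → ℝ) (π : ℕ → S → A → ℝ) (r : ℕ → S → A → ℝ)
    (hP : IsStochKernel P) (hπ : IsStochPolicy π) (hr0 : ∀ h s a, 0 ≤ r h s a) :
    ∀ k h s, 0 ≤ valFuel P π r k h s := by
  intro k
  induction k with
  | zero => intro h s; simp [valFuel]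
  | succ k ih =>
    intro h s
    simp only [valFuel]
    refine Finset.sum_nonneg fun a _ => mul_nonneg (hπ.1 _ _ _) (add_nonneg (hr0 _ _ _) ?_)
    exact Finset.sum_nonneg fun s' _ => mul_nonneg (hP.1 _ _ _ _) (ih _ _)

lemma val_le_sum (P : ℕ → S → A → S → ℝ) (π : ℕ → S → A → ℝ) (r : ℕ → S → A → ℝ)
    (hP : IsStochKernel P) (hπ : IsStochPolicy π)
    (σ : ℕ → S) (α : ℕ → A) (hmax : ∀ h s a, r h s a ≤ r h (σ h) (α h)) :
    ∀ k h s, valFuel P π r k h s ≤ ∑ i ∈ Finset.range k, r (h + i) (σ (h + i)) (α (h + i)) := by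
  intro k
  induction k with
  | zero => intro h s; simp [valFuel]
  | succ k ih =>
    intro h s
    simp only [valFuel]
    have hre : ∑ i ∈ Finset.range (k + 1), r (h + i) (σ (h + i)) (α (h + i))
        = r h (σ h) (α h) + ∑ i ∈ Finset.range k, r (h + 1 + i) (σ (h + 1 + i)) (α (h + 1 + i)) := by
      rw [Finset.sum_range_succ']
      have e : ∀ i ∈ Finset.range k,
          r (h + (i + 1)) (σ (h + (i + 1))) (α (h + (i + 1)))
            = r (h + 1 + i) (σ (h + 1 + i)) (α (h + 1 + i)) :=
        fun i _ => by rw [show h + (i + 1) = h + 1 + i by omega]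
      rw [Finset.sum_congr rfl e, show h + 0 = h from rfl, add_comm]
    rw [hre]
    set C := ∑ i ∈ Finset.range k, r (h + 1 + i) (σ (h + 1 + i)) (α (h + 1 + i)) with hC
    calc ∑ a, π h s a * (r h s a + ∑ s', P h s a s' * valFuel P π r k (h + 1) s')
        ≤ ∑ a, π h s a * (r h (σ h) (α h) + C) := by
          refine Finset.sum_le_sum fun a _ => mul_le_mul_of_nonneg_left ?_ (hπ.1 _ _ _)
          refine add_le_add (hmax _ _ _) ?_
          calc ∑ s', P h s a s' * valFuel P π r k (h + 1) s'
              ≤ ∑ s', P h s a s' * C :=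
                Finset.sum_le_sum fun s' _ =>
                  mul_le_mul_of_nonneg_left (ih _ _) (hP.1 _ _ _ _)
            _ = C := by rw [← Finset.sum_mul, hP.2, one_mul]
      _ = r h (σ h) (α h) + C := by rw [← Finset.sum_mul, hπ.2, one_mul]

lemma val_le_one (H : ℕ) (P : ℕ → S → A → S → ℝ) (π : ℕ → S → A → ℝ) (r : ℕ → S → A → ℝ)
    (hP : IsStochKernel P) (hπ : IsStochPolicy π) (hr0 : ∀ h s a, 0 ≤ r h s a)
    (hr1 : ∀ (σ : ℕ → S) (α : ℕ → A), ∑ h ∈ Finset.Icc 1 H, r h (σ h) (α h) ≤ 1)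
    [Nonempty S] [Nonempty A] :
    ∀ k h, 1 ≤ h → h + k ≤ H + 1 → ∀ s, valFuel P π r k h s ≤ 1 := by
  have hex : ∀ h : ℕ, ∃ p : S × A, ∀ q : S × A, r h q.1 q.2 ≤ r h p.1 p.2 := by
    intro h
    obtain ⟨p, _, hp⟩ := Finset.exists_max_image (Finset.univ : Finset (S × A))
      (fun q => r h q.1 q.2) Finset.univ_nonempty
    exact ⟨p, fun q => hp q (Finset.mem_univ q)⟩
  choose p hp using hex
  intro k h h1 hk s
  calc valFuel P π r k h s
      ≤ ∑ i ∈ Finset.range k, r (h + i) (p (h + i)).1 (p (h + i)).2 :=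
        val_le_sum P π r hP hπ (fun i => (p i).1) (fun i => (p i).2)
          (fun i s a => hp i (s, a)) k h s
    _ = ∑ j ∈ Finset.Ico h (h + k), r j (p j).1 (p j).2 := by
        rw [Finset.sum_Ico_eq_sum_range]
        simp
    _ ≤ ∑ j ∈ Finset.Icc 1 H, r j (p j).1 (p j).2 := by
        refine Finset.sum_le_sum_of_subset_of_nonneg ?_ (fun j _ _ => hr0 _ _ _)
        intro j hj
        simp only [Finset.mem_Ico] at hj
        simp only [Finset.mem_Icc]
        omega
    _ ≤ 1 := hr1 _ _

lemma tv_bound (d V : S → ℝ) (hd : ∑ s, d s = 0)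
    (hV0 : ∀ s, 0 ≤ V s) (hV1 : ∀ s, V s ≤ 1) :
    |∑ s, d s * V s| ≤ (1 / 2) * ∑ s, |d s| := by
  have key : ∑ s, d s * V s = ∑ s, d s * (V s - 1 / 2) := by
    simp only [mul_sub, Finset.sum_sub_distrib, ← Finset.sum_mul, hd, zero_mul, sub_zero]
  rw [key]
  calc |∑ s, d s * (V s - 1 / 2)| ≤ ∑ s, |d s * (V s - 1 / 2)| := Finset.abs_sum_le_sum_abs _ _
    _ ≤ ∑ s, |d s| * (1 / 2) := by
        refine Finset.sum_le_sum fun s _ => ?_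
        rw [abs_mul]
        refine mul_le_mul_of_nonneg_left ?_ (abs_nonneg _)
        rw [abs_le]
        constructor <;> linarith [hV0 s, hV1 s]
    _ = (1 / 2) * ∑ s, |d s| := by rw [← Finset.sum_mul]; ring

end helpers

section key

variable {S A : Type*} [Fintype S] [Fintype A]

lemma key_lemma (H : ℕ)
    (Pstar Phat : ℕ → S → A → S → ℝ) (π : ℕ → S → A → ℝ)
    (hPs : IsStochKernel Pstar) (hPh : IsStochKernel Phat) (hπ : IsStochPolicy π)
    (r : ℕ → S → A → ℝ) (hr0 : ∀ h s a, 0 ≤ r h s a)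
    (hr1 : ∀ (σ : ℕ → S) (α : ℕ → A), ∑ h ∈ Finset.Icc 1 H, r h (σ h) (α h) ≤ 1)
    [Nonempty S] [Nonempty A] :
    ∀ k h, 1 ≤ h → h + k ≤ H + 1 → ∀ s,
      |valFuel Pstar π r k h s - valFuel Phat π r k h s|
        ≤ tvalFuel Phat π
            (fun h s a => (1 / 2) * ∑ s', |Phat h s a s' - Pstar h s a s'|) k h s := by
  intro k
  induction k with
  | zero => intro h _ _ s; simp [valFuel, tvalFuel]
  | succ k ih =>
    intro h h1 hk s
    simp only [valFuel, tvalFuel]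
    set f : ℕ → S → A → ℝ :=
      fun h s a => (1 / 2) * ∑ s', |Phat h s a s' - Pstar h s a s'| with hf
    have hVs0 : ∀ s', 0 ≤ valFuel Pstar π r k (h + 1) s' :=
      fun s' => val_nonneg Pstar π r hPs hπ hr0 k (h + 1) s'
    have hVh0 : ∀ s', 0 ≤ valFuel Phat π r k (h + 1) s' :=
      fun s' => val_nonneg Phat π r hPh hπ hr0 k (h + 1) s'
    have hVs1 : ∀ s', valFuel Pstar π r k (h + 1) s' ≤ 1 :=
      val_le_one H Pstar π r hPs hπ hr0 hr1 k (h + 1) (by omega) (by omega)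
    have hVh1 : ∀ s', valFuel Phat π r k (h + 1) s' ≤ 1 :=
      val_le_one H Phat π r hPh hπ hr0 hr1 k (h + 1) (by omega) (by omega)
    have ih' : ∀ s', |valFuel Pstar π r k (h + 1) s' - valFuel Phat π r k (h + 1) s'|
        ≤ tvalFuel Phat π f k (h + 1) s' := ih (h + 1) (by omega) (by omega)
    have hdiff : (∑ a, π h s a * (r h s a + ∑ s', Pstar h s a s' * valFuel Pstar π r k (h + 1) s'))
        - (∑ a, π h s a * (r h s a + ∑ s', Phat h s a s' * valFuel Phat π r k (h + 1) s'))
        = ∑ a, π h s a * ((∑ s', Pstar h s a s' * valFuel Pstar π r k (h + 1) s')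
            - (∑ s', Phat h s a s' * valFuel Phat π r k (h + 1) s')) := by
      rw [← Finset.sum_sub_distrib]
      exact Finset.sum_congr rfl fun a _ => by ring
    rw [hdiff]
    calc |∑ a, π h s a * ((∑ s', Pstar h s a s' * valFuel Pstar π r k (h + 1) s')
            - (∑ s', Phat h s a s' * valFuel Phat π r k (h + 1) s'))|
        ≤ ∑ a, |π h s a * ((∑ s', Pstar h s a s' * valFuel Pstar π r k (h + 1) s')
            - (∑ s', Phat h s a s' * valFuel Phat π r k (h + 1) s'))| :=
          Finset.abs_sum_le_sum_abs _ _
      _ ≤ ∑ a, π h s a * min 1 (f h s a + ∑ s', Phat h s a s' * tvalFuel Phat π f k (h + 1) s') := by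
          refine Finset.sum_le_sum fun a _ => ?_
          rw [abs_mul, abs_of_nonneg (hπ.1 h s a)]
          refine mul_le_mul_of_nonneg_left ?_ (hπ.1 h s a)
          set Astar := ∑ s', Pstar h s a s' * valFuel Pstar π r k (h + 1) s' with hAs
          set Ahat := ∑ s', Phat h s a s' * valFuel Phat π r k (h + 1) s' with hAh
          refine le_min ?_ ?_
          · -- |Astar - Ahat| ≤ 1
            have h1s : 0 ≤ Astar :=
              Finset.sum_nonneg fun s' _ => mul_nonneg (hPs.1 _ _ _ _) (hVs0 s')
            have h2s : Astar ≤ 1 := by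
              calc Astar ≤ ∑ s', Pstar h s a s' * 1 :=
                    Finset.sum_le_sum fun s' _ =>
                      mul_le_mul_of_nonneg_left (hVs1 s') (hPs.1 _ _ _ _)
                _ = 1 := by simp [hPs.2 h s a]
            have h1h : 0 ≤ Ahat :=
              Finset.sum_nonneg fun s' _ => mul_nonneg (hPh.1 _ _ _ _) (hVh0 s')
            have h2h : Ahat ≤ 1 := by
              calc Ahat ≤ ∑ s', Phat h s a s' * 1 :=
                    Finset.sum_le_sum fun s' _ =>
                      mul_le_mul_of_nonneg_left (hVh1 s') (hPh.1 _ _ _ _)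
                _ = 1 := by simp [hPh.2 h s a]
            rw [abs_le]; constructor <;> linarith
          · -- |Astar - Ahat| ≤ f + P̂ tval
            have hsplit : Astar - Ahat
                = (∑ s', (Pstar h s a s' - Phat h s a s') * valFuel Pstar π r k (h + 1) s')
                  + ∑ s', Phat h s a s' *
                      (valFuel Pstar π r k (h + 1) s' - valFuel Phat π r k (h + 1) s') := by
              rw [hAs, hAh]
              simp only [sub_mul, mul_sub, Finset.sum_sub_distrib]
              ring
            rw [hsplit]
            have htv : |∑ s', (Pstar h s a s' - Phat h s a s') * valFuel Pstar π r k (h + 1) s'|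
                ≤ f h s a := by
              have hd : ∑ s', (Pstar h s a s' - Phat h s a s') = 0 := by
                rw [Finset.sum_sub_distrib, hPs.2, hPh.2, sub_self]
              have := tv_bound (fun s' => Pstar h s a s' - Phat h s a s')
                (fun s' => valFuel Pstar π r k (h + 1) s') hd hVs0 hVs1
              rw [hf]
              simp only
              calc |∑ s', (Pstar h s a s' - Phat h s a s') * valFuel Pstar π r k (h + 1) s'|
                  ≤ (1 / 2) * ∑ s', |Pstar h s a s' - Phat h s a s'| := this
                _ = (1 / 2) * ∑ s', |Phat h s a s' - Pstar h s a s'| := by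
                    congr 1; exact Finset.sum_congr rfl fun s' _ => abs_sub_comm _ _
            have hsec : |∑ s', Phat h s a s' *
                  (valFuel Pstar π r k (h + 1) s' - valFuel Phat π r k (h + 1) s')|
                ≤ ∑ s', Phat h s a s' * tvalFuel Phat π f k (h + 1) s' := by
              calc |∑ s', Phat h s a s' *
                    (valFuel Pstar π r k (h + 1) s' - valFuel Phat π r k (h + 1) s')|
                  ≤ ∑ s', |Phat h s a s' *
                      (valFuel Pstar π r k (h + 1) s' - valFuel Phat π r k (h + 1) s')| :=
                    Finset.abs_sum_le_sum_abs _ _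
                _ ≤ ∑ s', Phat h s a s' * tvalFuel Phat π f k (h + 1) s' := by
                    refine Finset.sum_le_sum fun s' _ => ?_
                    rw [abs_mul, abs_of_nonneg (hPh.1 _ _ _ _)]
                    exact mul_le_mul_of_nonneg_left (ih' s') (hPh.1 _ _ _ _)
            calc |(∑ s', (Pstar h s a s' - Phat h s a s') * valFuel Pstar π r k (h + 1) s')
                  + ∑ s', Phat h s a s' *
                      (valFuel Pstar π r k (h + 1) s' - valFuel Phat π r k (h + 1) s')|
                ≤ |∑ s', (Pstar h s a s' - Phat h s a s') * valFuel Pstar π r k (h + 1) s'|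
                  + |∑ s', Phat h s a s' *
                      (valFuel Pstar π r k (h + 1) s' - valFuel Phat π r k (h + 1) s')| :=
                  abs_add_le _ _
              _ ≤ f h s a + ∑ s', Phat h s a s' * tvalFuel Phat π f k (h + 1) s' :=
                  add_le_add htv hsec

end key

/-- With `f_h(s,a) = ‖P̂_h(⋅|s,a) - P⋆_h(⋅|s,a)‖_TV` and normalized reward
`0 ≤ ∑_h r_h ≤ 1`, one has `|V^π_{P⋆,r} - V^π_{P̂,r}| ≤ V̂^π_{1,P̂,f}(s₁)`. -/
theorem stmt_12 {S A : Type*} [Fintype S] [Fintype A]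
    (H : ℕ) (hH : 1 ≤ H)
    (Pstar Phat : ℕ → S → A → S → ℝ) (π : ℕ → S → A → ℝ)
    (hPs : IsStochKernel Pstar) (hPh : IsStochKernel Phat) (hπ : IsStochPolicy π)
    (r : ℕ → S → A → ℝ) (hr0 : ∀ h s a, 0 ≤ r h s a)
    (hr1 : ∀ (σ : ℕ → S) (α : ℕ → A), ∑ h ∈ Finset.Icc 1 H, r h (σ h) (α h) ≤ 1)
    (s1 : S) :
    |valFuel Pstar π r H 1 s1 - valFuel Phat π r H 1 s1|
      ≤ tvalFuel Phat π
          (fun h s a => (1 / 2) * ∑ s', |Phat h s a s' - Pstar h s a s'|)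
          H 1 s1 := by
  haveI : Nonempty S := ⟨s1⟩
  haveI : Nonempty A := by
    by_contra hA
    haveI : IsEmpty A := not_nonempty_iff.mp hA
    have := hπ.2 0 s1
    simp [Finset.univ_eq_empty] at this
  exact key_lemma H Pstar Phat π hPs hPh hπ r hr0 hr1 H 1 le_rfl (by omega) s1
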